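/- Let L be a real m×n matrix with linearly independent rows, let F ⊆ ℝⁿ be a finite set of vectors with all coordinates nonnegative, and let T be an invertible real m×m matrix such that every row of TL is a finite linear combination of elements of F with nonnegative coefficients. Then there exist m linearly independent vectors e₁, …, e_m ∈ F such that Σᵢ ‖eᵢ‖₀ ≤ ‖TL‖₀. -/

import Mathlib

/-- The ℓ0-norm of a vector: the number of nonzero entries. -/
noncomputable def l0Vec {n : ℕ} (v : Fin n → ℝ) : ℕ := Set.ncard {j | v j ≠ 0}

/-- The ℓ0-norm of a matrix: the number of nonzero entries. -/
noncomputable def l0Mat {m n : ℕ} (A : Matrix (Fin m) (Fin n) ℝ) : ℕ :=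
  Set.ncard {p : Fin m × Fin n | A p.1 p.2 ≠ 0}

/-! Rows `vᵢ` of `T * L` are linearly independent, so some alternating `m`-form `A` has
`A v ≠ 0`. Expanding `A v` multilinearly along `vᵢ = ∑ₑ cᵢ(e) • e` writes it as a sum of
`(∏ᵢ cᵢ(eᵢ)) • A e` over transversals `e` of `F`, so one of them has all `cᵢ(eᵢ) ≠ 0` and
`A e ≠ 0`, hence is linearly independent. Since all coefficients and vectors are nonnegative,
nothing cancels in `vᵢ`, so the support of `eᵢ` lies in that of `vᵢ`. -/

open Finset

theorem Matrix.linearIndependent_mul_of_isUnit {K : Type*} [Field K] {m n : Type*} [Fintype m]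
    [DecidableEq m] {T : Matrix m m K} (hT : IsUnit T) {L : Matrix m n K}
    (hL : LinearIndependent K L) : LinearIndependent K (T * L) := by
  have hTL : (T * L).vecMul = L.vecMul ∘ T.vecMul :=
    funext fun x => (Matrix.vecMul_vecMul x T L).symm
  refine Matrix.vecMul_injective_iff.mp ?_
  rw [hTL]
  exact (Matrix.vecMul_injective_iff.mpr hL).comp (Matrix.vecMul_injective_of_isUnit hT)

theorem LinearIndependent.exists_alternatingMap_ne_zero {K V ι : Type*} [Field K] [AddCommGroup V]
    [Module K V] [Fintype ι] [DecidableEq ι] {v : ι → V} (hv : LinearIndependent K v) :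
    ∃ A : V [⋀^ι]→ₗ[K] K, A v ≠ 0 := by
  -- `P` sends `v` to the standard basis of `ι → K`, where the determinant is `1`.
  obtain ⟨P, hP⟩ := (Fintype.linearCombination K v).exists_leftInverse_of_injective
    (LinearMap.ker_eq_bot.mpr hv.fintypeLinearCombination_injective)
  refine ⟨(Pi.basisFun K ι).det.compLinearMap P, ?_⟩
  have hPv : (fun i => P (v i)) = Pi.basisFun K ι := by
    ext1 i
    rw [Pi.basisFun_apply, ← one_smul K (v i), ← Fintype.linearCombination_apply_single K v,
      ← LinearMap.comp_apply, hP, LinearMap.id_apply]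
  rw [AlternatingMap.compLinearMap_apply, hPv, Module.Basis.det_self]
  exact one_ne_zero

theorem LinearIndependent.exists_linearIndependent_of_eq_sum_smul {K V ι : Type*} [Field K]
    [AddCommGroup V] [Module K V] [Fintype ι] [DecidableEq ι] {v : ι → V}
    (hv : LinearIndependent K v) (F : Finset V) (c : ι → V → K)
    (hvc : ∀ i, v i = ∑ e ∈ F, c i e • e) :
    ∃ e : ι → V, LinearIndependent K e ∧ ∀ i, e i ∈ F ∧ c i (e i) ≠ 0 := by
  obtain ⟨A, hA⟩ := hv.exists_alternatingMap_ne_zero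
  have hexpand : A v = ∑ e ∈ Fintype.piFinset fun _ => F, (∏ i, c i (e i)) • A e := by
    rw [show v = fun i => ∑ e ∈ F, c i e • e from funext hvc]
    refine (A.toMultilinearMap.map_sum_finset _ _).trans ?_
    exact sum_congr rfl fun e _ => A.map_smul_univ (fun i => c i (e i)) e
  rw [hexpand] at hA
  obtain ⟨e, heF, he⟩ := exists_ne_zero_of_sum_ne_zero hA
  obtain ⟨hc, hAe⟩ := smul_ne_zero_iff.mp he
  refine ⟨e, ?_, fun i => ⟨Fintype.mem_piFinset.mp heF i, prod_ne_zero_iff.mp hc i (mem_univ i)⟩⟩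
  by_contra hdep
  exact hAe (A.map_linearDependent e hdep)

theorem Function.support_subset_support_sum_smul_of_nonneg {R ι : Type*} [Field R] [LinearOrder R]
    [IsStrictOrderedRing R] {F : Finset (ι → R)} (hF : ∀ v ∈ F, ∀ j, 0 ≤ v j) {c : (ι → R) → R}
    (hc : ∀ e, 0 ≤ c e) {e : ι → R} (heF : e ∈ F) (hce : c e ≠ 0) :
    support e ⊆ support (∑ e ∈ F, c e • e) := by
  intro j hej
  have hsum : (∑ e ∈ F, c e • e) j = ∑ e ∈ F, c e * e j := by
    simp only [Finset.sum_apply, Pi.smul_apply, smul_eq_mul]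
  rw [mem_support, hsum]
  refine (lt_of_lt_of_le ?_ (single_le_sum (f := fun e => c e * e j)
    (fun e' he' => mul_nonneg (hc e') (hF e' he' j)) heF)).ne'
  exact mul_pos ((hc e).lt_of_ne' hce) ((hF e heF j).lt_of_ne' hej)

theorem l0Vec_mono {n : ℕ} {u v : Fin n → ℝ} (h : Function.support u ⊆ Function.support v) :
    l0Vec u ≤ l0Vec v :=
  Set.ncard_le_ncard h (Set.toFinite _)

theorem l0Mat_eq_sum_l0Vec {m n : ℕ} (A : Matrix (Fin m) (Fin n) ℝ) :
    l0Mat A = ∑ i, l0Vec (A i) := by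
  classical
  simp only [l0Mat, l0Vec, Set.ncard_eq_toFinset_card', Set.toFinset_ofPred, card_filter,
    Fintype.sum_prod_type]

/-- Let `L` be a real `m × n` matrix with linearly independent rows, let
`F ⊆ ℝⁿ` be a finite set of vectors with all coordinates nonnegative, and let `T` be an
invertible real `m × m` matrix such that every row of `T * L` is a finite linear
combination of elements of `F` with nonnegative coefficients. Then there exist `m`
linearly independent vectors `e₁, …, e_m ∈ F` such that `Σᵢ ‖eᵢ‖₀ ≤ ‖T * L‖₀`. -/
theorem exists_transversal_with_small_l0
    (m n : ℕ) (L : Matrix (Fin m) (Fin n) ℝ) (hL : LinearIndependent ℝ L)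
    (F : Finset (Fin n → ℝ)) (hF : ∀ v ∈ F, ∀ j, 0 ≤ v j)
    (T : Matrix (Fin m) (Fin m) ℝ) (hT : IsUnit T)
    (hcomb : ∀ i, ∃ c : (Fin n → ℝ) → ℝ, (∀ e, 0 ≤ c e) ∧
      (T * L) i = ∑ e ∈ F, c e • e) :
    ∃ e : Fin m → (Fin n → ℝ), LinearIndependent ℝ e ∧ (∀ i, e i ∈ F) ∧
      ∑ i, l0Vec (e i) ≤ l0Mat (T * L) := by
  choose c hc hTLc using hcomb
  obtain ⟨e, he, heF⟩ := (Matrix.linearIndependent_mul_of_isUnit hT hL)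
    |>.exists_linearIndependent_of_eq_sum_smul F c hTLc
  refine ⟨e, he, fun i => (heF i).1, ?_⟩
  rw [l0Mat_eq_sum_l0Vec]
  refine sum_le_sum fun i _ => l0Vec_mono ?_
  rw [hTLc i]
  exact Function.support_subset_support_sum_smul_of_nonneg hF (hc i) (heF i).1 (heF i).2
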